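/- arXiv:2604.04320 — 3 statements merged into one kernel-verified Lean document; each statement's English description precedes it below -/
import Mathlib

section
/- Let (X, μ) be a measure space, let r ≥ 2, and let a_0, …, a_{r-1} : X → ℂ be measurable functions. Suppose (f_n)_{n≥0} is a sequence of measurable functions f_n : X → ℂ satisfying, for every n ≥ 0 and μ-almost every x ∈ X, f_{n+r}(x) = a_0(x) f_{n+r-1}(x) + a_1(x) f_{n+r-2}(x) + ⋯ + a_{r-1}(x) f_n(x). Then for every n ≥ r, f_n(x) = Σ_{s=0}^{r-1} ρ(n−s, r; a(x)) · w_s(x) for μ-almost every x ∈ X, where w_s(x) := Σ_{j=s}^{r-1} a_j(x) f_{s+r-1-j}(x) for s = 0, …, r−1. -/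
/-!
The coefficients `ρ(m) = ρ(m, r; a)` satisfy the recurrence of the `f_n` forced by a unit impulse,
`ρ(m) = [m = r] + ∑_{j<r} a_j ρ(m - 1 - j)`: this is Pascal's rule
`multinomial k = ∑_j multinomial (k - e_j)` summed over the multiplicity vectors `k` of the
partitions of `m - r` into parts of size at most `r`, the part `j + 1` being removed once.
On the other hand, sorting the terms of the recurrence for `f_{n+r}` into those that reach back
to an initial value `f_0, …, f_{r-1}` and those that do not shows that `g_n := f_{n+r}` satisfies
the same recurrence forced by `w_n` (read as `0` for `n ≥ r`). Both recurrences determine their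
solutions, so by linearity `f_{n+r} = ∑_s ρ(n + r - s) w_s`, by strong induction on `n`.
-/

open Finset MeasureTheory

/-- The combinatorial coefficient `ρ(m, r; A)`: the sum, over multi-indices
`k = (k₀, …, k_{r-1}) ∈ ℤ₊ʳ` with `1·k₀ + 2·k₁ + ⋯ + r·k_{r-1} = m − r`, of the multinomial
coefficient `(k₀+⋯+k_{r-1})! / (k₀!⋯k_{r-1}!)` times `A₀^{k₀} ⋯ A_{r-1}^{k_{r-1}}`,
with the convention `ρ(m, r; A) = 0` for `m < r` (and in particular `ρ(r, r; A) = 1`). -/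
noncomputable def rho {R : Type*} [Ring R] (r : ℕ) (A : ℕ → R) (m : ℕ) : R :=
  if m < r then 0
  else ∑ k ∈ (Fintype.piFinset fun _ : Fin r => Finset.range (m - r + 1)).filter
      (fun k : Fin r → ℕ => ∑ j : Fin r, ((j : ℕ) + 1) * k j = m - r),
    (Nat.multinomial Finset.univ k : R) * (List.ofFn fun j : Fin r => A (j : ℕ) ^ k j).prod

theorem Pi.tsub_single_add_single {α : Type*} [DecidableEq α] {k : α → ℕ} {j : α}
    (h : k j ≠ 0) : k - Pi.single j 1 + Pi.single j 1 = k := by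
  refine tsub_add_cancel_of_le fun i => ?_
  rcases eq_or_ne i j with rfl | hi
  · simpa using Nat.one_le_iff_ne_zero.mpr h
  · simp [Pi.single_eq_of_ne hi]

namespace Nat
variable {α : Type*} [Fintype α] [DecidableEq α]

theorem succ_mul_multinomial_add_single (k : α → ℕ) (j : α) :
    (k j + 1) * multinomial univ (k + Pi.single j 1) = (∑ i, k i + 1) * multinomial univ k := by
  have hprod : ∏ i, ((k + Pi.single j 1 : α → ℕ) i)! = (k j + 1) * ∏ i, (k i)! := by
    rw [Fintype.prod_eq_mul_prod_compl j, Fintype.prod_eq_mul_prod_compl j (fun i => (k i)!),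
      Finset.prod_congr rfl fun i hi => by
        rw [Pi.add_apply, Pi.single_eq_of_ne (by simpa using hi), add_zero]]
    simp [Nat.factorial_succ, mul_assoc]
  have hsum : ∑ i, (k + Pi.single j 1 : α → ℕ) i = ∑ i, k i + 1 := by
    simp [Finset.sum_add_distrib]
  apply Nat.eq_of_mul_eq_mul_left (Finset.prod_pos fun i _ => (k i).factorial_pos)
  calc (∏ i, (k i)!) * ((k j + 1) * multinomial univ (k + Pi.single j 1))
      = (∏ i, ((k + Pi.single j 1 : α → ℕ) i)!) * multinomial univ (k + Pi.single j 1) := by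
        rw [hprod]; ring
    _ = (∑ i, k i + 1) * ((∏ i, (k i)!) * multinomial univ k) := by
        rw [multinomial_spec, multinomial_spec, hsum, factorial_succ]
    _ = _ := by ring

theorem multinomial_eq_sum_tsub_single (k : α → ℕ) (hk : k ≠ 0) :
    multinomial univ k = ∑ j, if k j = 0 then 0 else multinomial univ (k - Pi.single j 1) := by
  have hpos : 0 < ∑ i, k i := by
    obtain ⟨i, hi⟩ := Function.ne_iff.mp hk
    exact (Nat.pos_of_ne_zero hi).trans_le (single_le_sum (fun _ _ => zero_le _) (mem_univ i))
  apply Nat.eq_of_mul_eq_mul_left hpos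
  have hterm : ∀ j, (∑ i, k i) * (if k j = 0 then 0 else multinomial univ (k - Pi.single j 1)) =
      k j * multinomial univ k := by
    intro j
    split_ifs with hj
    · simp [hj]
    · obtain ⟨k', rfl⟩ : ∃ k' : α → ℕ, k = k' + Pi.single j 1 :=
        ⟨_, (Pi.tsub_single_add_single hj).symm⟩
      simpa [add_tsub_cancel_right, sum_add_distrib] using
        (succ_mul_multinomial_add_single k' j).symm
  rw [mul_sum, sum_congr rfl fun j _ => hterm j, ← sum_mul]

end Nat

theorem sum_impulse_mul_sum_Icc {R : Type*} [Semiring R] (g : ℕ → ℕ → R) (n r : ℕ) :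
    ∑ s ∈ range r, (if n + r - s = r then 1 else 0) * ∑ j ∈ Icc s (r - 1), g s j =
      ∑ j ∈ range r, if n ≤ j then g n j else 0 := by
  rw [← sum_filter]
  calc ∑ s ∈ range r, (if n + r - s = r then 1 else 0) * ∑ j ∈ Icc s (r - 1), g s j
      = ∑ s ∈ range r, if n = s then ∑ j ∈ Icc s (r - 1), g s j else 0 :=
        sum_congr rfl fun s hs => by
          have : n + r - s = r ↔ n = s := by simp only [mem_range] at hs; omega
          simp only [this, ite_mul, one_mul, zero_mul]
    _ = _ := by
      rw [sum_ite_eq]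
      split_ifs with hn <;> simp only [mem_range] at hn
      · exact sum_congr (by ext; simp only [mem_Icc, mem_filter, mem_range]; omega) fun _ _ => rfl
      · exact (sum_eq_zero fun j hj => by simp only [mem_filter, mem_range] at hj; omega).symm

section Rho
variable {R : Type*} [CommRing R] {r : ℕ}

/-- Multiplicity vectors of the partitions of `N` into parts of size at most `r`:
`k j` counts the parts equal to `j + 1`. -/
def partitionMultiplicities (r N : ℕ) : Finset (Fin r → ℕ) :=
  (Fintype.piFinset fun _ : Fin r => range (N + 1)).filter
    fun k => ∑ j : Fin r, ((j : ℕ) + 1) * k j = N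

theorem mem_partitionMultiplicities {N : ℕ} {k : Fin r → ℕ} :
    k ∈ partitionMultiplicities r N ↔ ∑ j : Fin r, ((j : ℕ) + 1) * k j = N := by
  refine ⟨fun h => (mem_filter.mp h).2, fun h => mem_filter.mpr ⟨?_, h⟩⟩
  refine Fintype.mem_piFinset.mpr fun i => mem_range.mpr (Nat.lt_succ_of_le ?_)
  calc k i ≤ ((i : ℕ) + 1) * k i := Nat.le_mul_of_pos_left _ i.val.succ_pos
    _ ≤ N := h ▸ single_le_sum (f := fun j : Fin r => ((j : ℕ) + 1) * k j)
        (fun _ _ => Nat.zero_le _) (mem_univ i)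

theorem partitionMultiplicities_zero : partitionMultiplicities r 0 = {0} := by
  ext k
  simp [mem_partitionMultiplicities, funext_iff]

theorem sum_succ_mul_add_single (k : Fin r → ℕ) (j : Fin r) :
    ∑ i : Fin r, ((i : ℕ) + 1) * (k + Pi.single j 1 : Fin r → ℕ) i =
      ∑ i : Fin r, ((i : ℕ) + 1) * k i + (j + 1) := by
  simp [mul_add, sum_add_distrib, Pi.single_apply]

theorem filter_partitionMultiplicities_ne_zero (j : Fin r) (M : ℕ) :
    (partitionMultiplicities r (M + j + 1)).filter (fun k => k j ≠ 0) =
      (partitionMultiplicities r M).map (addRightEmbedding (Pi.single j 1)) := by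
  ext k
  simp only [mem_filter, mem_map, mem_partitionMultiplicities, addRightEmbedding_apply]
  constructor
  · rintro ⟨hk, hj⟩
    refine ⟨k - Pi.single j 1, ?_, Pi.tsub_single_add_single hj⟩
    have := sum_succ_mul_add_single (k - Pi.single j 1) j
    rw [Pi.tsub_single_add_single hj] at this
    omega
  · rintro ⟨k, hk, rfl⟩
    refine ⟨by rw [sum_succ_mul_add_single, hk, add_assoc], by simp⟩

theorem filter_partitionMultiplicities_ne_zero_of_lt {j : Fin r} {N : ℕ} (h : N < j) :
    (partitionMultiplicities r (N + 1)).filter (fun k => k j ≠ 0) = ∅ := by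
  refine filter_false_of_mem fun k hk hj => ?_
  have := single_le_sum (f := fun i : Fin r => ((i : ℕ) + 1) * k i) (fun _ _ => Nat.zero_le _)
    (mem_univ j)
  rw [mem_partitionMultiplicities.mp hk] at this
  have := Nat.le_mul_of_pos_right ((j : ℕ) + 1) (Nat.pos_of_ne_zero hj)
  omega

variable (A : ℕ → R)

theorem rho_of_lt {m : ℕ} (h : m < r) : rho r A m = 0 := if_pos h

theorem rho_add_self (N : ℕ) :
    rho r A (N + r) = ∑ k ∈ partitionMultiplicities r N,
      (Nat.multinomial univ k : R) * ∏ i : Fin r, A i ^ k i := by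
  simp only [rho, partitionMultiplicities, List.prod_ofFn, Nat.add_sub_cancel,
    if_neg (Nat.not_lt.mpr (Nat.le_add_left r N))]

theorem rho_self : rho r A r = 1 := by
  simpa [partitionMultiplicities_zero, Nat.multinomial] using rho_add_self (r := r) A 0

theorem prod_pow_add_single (k : Fin r → ℕ) (j : Fin r) :
    ∏ i : Fin r, A i ^ (k + Pi.single j 1 : Fin r → ℕ) i =
      A j * ∏ i : Fin r, A i ^ k i := by
  simp only [Pi.add_apply, pow_add, prod_mul_distrib, Pi.single_apply, pow_ite, pow_one, pow_zero,
    prod_ite_eq', mem_univ, if_true, mul_comm]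

theorem rho_succ_add_self (N : ℕ) :
    rho r A (N + 1 + r) = ∑ j ∈ range r, A j * rho r A (N + r - j) := by
  rw [rho_add_self, ← Fin.sum_univ_eq_sum_range (fun j => A j * rho r A (N + r - j))]
  calc ∑ k ∈ partitionMultiplicities r (N + 1),
        (Nat.multinomial univ k : R) * ∏ i : Fin r, A i ^ k i
      = ∑ k ∈ partitionMultiplicities r (N + 1), ∑ j : Fin r,
          (if k j = 0 then 0 else (Nat.multinomial univ (k - Pi.single j 1) : R)) *
            ∏ i : Fin r, A i ^ k i := by
        refine sum_congr rfl fun k hk => ?_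
        have hk0 : k ≠ 0 := by
          rintro rfl
          simp [mem_partitionMultiplicities] at hk
        rw [Nat.multinomial_eq_sum_tsub_single k hk0, ← sum_mul]
        push_cast [apply_ite]
        rfl
    _ = ∑ j : Fin r, ∑ k ∈ (partitionMultiplicities r (N + 1)).filter (fun k => k j ≠ 0),
          (Nat.multinomial univ (k - Pi.single j 1) : R) * ∏ i : Fin r, A i ^ k i := by
        rw [sum_comm]
        refine sum_congr rfl fun j _ => ?_
        rw [sum_filter]
        exact sum_congr rfl fun k _ => by split_ifs <;> simp_all
    _ = ∑ j : Fin r, A j * rho r A (N + r - j) := by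
        refine sum_congr rfl fun j _ => ?_
        by_cases hj : (j : ℕ) ≤ N
        · obtain ⟨M, rfl⟩ := Nat.exists_eq_add_of_le' hj
          rw [show M + j + r - j = M + r by omega, rho_add_self, mul_sum,
            filter_partitionMultiplicities_ne_zero, sum_map]
          refine sum_congr rfl fun k _ => ?_
          simp only [addRightEmbedding_apply, add_tsub_cancel_right, prod_pow_add_single]
          ring
        · rw [filter_partitionMultiplicities_ne_zero_of_lt (by omega), sum_empty,
            rho_of_lt A (by omega), mul_zero]

theorem rho_eq_ite_add_sum (m : ℕ) :
    rho r A m = (if m = r then 1 else 0) + ∑ j ∈ range r, A j * rho r A (m - 1 - j) := by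
  rcases lt_trichotomy m r with hm | rfl | hm
  · rw [rho_of_lt A hm, if_neg hm.ne, zero_add]
    exact (sum_eq_zero fun j _ => by rw [rho_of_lt A (by omega), mul_zero]).symm
  · rw [rho_self, if_pos rfl, left_eq_add]
    refine sum_eq_zero fun j hj => ?_
    rw [rho_of_lt A (by simp only [mem_range] at hj; omega), mul_zero]
  · obtain ⟨N, rfl⟩ := Nat.exists_eq_add_of_lt hm
    rw [if_neg (by omega), zero_add, show r + N + 1 = N + 1 + r by ring, rho_succ_add_self]
    exact sum_congr rfl fun j _ => by rw [show N + 1 + r - 1 - j = N + r - j by omega]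

theorem eq_sum_rho_mul_of_recurrence (F : ℕ → R)
    (hrec : ∀ n, F (n + r) = ∑ j ∈ range r, A j * F (n + (r - 1 - j))) (n : ℕ) :
    F (n + r) = ∑ s ∈ range r, rho r A (n + r - s) *
      ∑ j ∈ Icc s (r - 1), A j * F (s + (r - 1 - j)) := by
  induction n using Nat.strong_induction_on with
  | _ n ih =>
  set w : ℕ → R := fun s => ∑ j ∈ Icc s (r - 1), A j * F (s + (r - 1 - j))
  have hinduction : ∀ j ∈ range r, ∑ s ∈ range r, rho r A (n + r - s - 1 - j) * w s =
      if j < n then F (n + (r - 1 - j)) else 0 := by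
    intro j hj
    simp only [mem_range] at hj
    split_ifs with hjn
    · rw [show n + (r - 1 - j) = n - 1 - j + r by omega, ih (n - 1 - j) (by omega)]
      exact sum_congr rfl fun s hs => by
        rw [show n + r - s - 1 - j = n - 1 - j + r - s by simp only [mem_range] at hs; omega]
    · exact sum_eq_zero fun s _ => by rw [rho_of_lt A (by omega), zero_mul]
  calc F (n + r) = ∑ j ∈ range r, A j * F (n + (r - 1 - j)) := hrec n
    _ = ∑ j ∈ range r, ((if n ≤ j then A j * F (n + (r - 1 - j)) else 0) +
          A j * if j < n then F (n + (r - 1 - j)) else 0) :=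
        sum_congr rfl fun j _ => by split_ifs <;> first | omega | simp
    _ = ∑ s ∈ range r, (if n + r - s = r then 1 else 0) * w s +
          ∑ j ∈ range r, A j * ∑ s ∈ range r, rho r A (n + r - s - 1 - j) * w s := by
        rw [sum_impulse_mul_sum_Icc, ← sum_add_distrib]
        exact sum_congr rfl fun j hj => by rw [hinduction j hj]
    _ = ∑ s ∈ range r, ((if n + r - s = r then 1 else 0) +
          ∑ j ∈ range r, A j * rho r A (n + r - s - 1 - j)) * w s := by
        simp only [add_mul, sum_add_distrib, sum_mul, mul_sum, mul_assoc]
        rw [sum_comm]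
    _ = _ := sum_congr rfl fun s _ => by rw [← rho_eq_ite_add_sum]

end Rho

theorem ae_recurrence_combinatorial_formula_general
    {X : Type*} [MeasurableSpace X] (μ : Measure X) {r : ℕ}
    (a : ℕ → X → ℂ)
    (f : ℕ → X → ℂ)
    (hrec : ∀ n : ℕ, ∀ᵐ x ∂μ,
      f (n + r) x = ∑ j ∈ Finset.range r, a j x * f (n + (r - 1 - j)) x) :
    ∀ n : ℕ, r ≤ n → ∀ᵐ x ∂μ,
      f n x = ∑ s ∈ Finset.range r, rho r (fun j => a j x) (n - s) *
        (∑ j ∈ Finset.Icc s (r - 1), a j x * f (s + (r - 1 - j)) x) := by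
  intro n hn
  filter_upwards [ae_all_iff.mpr hrec] with x hx
  simpa only [Nat.sub_add_cancel hn] using
    eq_sum_rho_mul_of_recurrence (fun j => a j x) (fun m => f m x) hx (n - r)

/-- Combinatorial formula for the solutions of a pointwise (μ-a.e.) linear recurrence of order
`r` for measurable complex-valued functions, with measurable coefficient functions. -/
theorem ae_recurrence_combinatorial_formula
    {X : Type*} [MeasurableSpace X] (μ : Measure X) {r : ℕ} (hr : 2 ≤ r)
    (a : ℕ → X → ℂ) (ha : ∀ j < r, Measurable (a j))
    (f : ℕ → X → ℂ) (hf : ∀ n, Measurable (f n))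
    (hrec : ∀ n : ℕ, ∀ᵐ x ∂μ,
      f (n + r) x = ∑ j ∈ Finset.range r, a j x * f (n + (r - 1 - j)) x) :
    ∀ n : ℕ, r ≤ n → ∀ᵐ x ∂μ,
      f n x = ∑ s ∈ Finset.range r, rho r (fun j => a j x) (n - s) *
        (∑ j ∈ Finset.Icc s (r - 1), a j x * f (s + (r - 1 - j)) x) :=
  ae_recurrence_combinatorial_formula_general μ a f hrec
end

section
/- Let H be a complex Hilbert space and let T be a bounded operator on H. Suppose λ_1, …, λ_s are complex numbers, m_1, …, m_s are positive integers, and C_{i,j} (1 ≤ i ≤ s, 0 ≤ j ≤ m_i − 1) are bounded operators on H such that T^n = Σ_{i=1}^{s} Σ_{j=0}^{m_i−1} C_{i,j} · n^j · λ_i^n for every n ≥ 0. Then the operator exponential satisfies exp(T) = Σ_{i=1}^{s} Σ_{j=0}^{m_i−1} C_{i,j} · e^{λ_i} · B_j(λ_i), where B_j is the j-th Bell polynomial, B_j(x) = Σ_{k=0}^{j} S(j,k) x^k, and S(j,k) is the Stirling number of the second kind (the number of partitions of a set with j elements into k nonempty blocks). -/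
/-!
Dividing the expansion of `Tⁿ` by `n!` and summing over `n` reduces the theorem to the scalar
series `Σₙ nʲ zⁿ / n! = e^z B_j(z)`. Sorting the maps `Fin j → Fin n` by their partition into
fibers gives `nʲ = Σₖ S(j,k) n(n-1)⋯(n-k+1)`, and `Σₙ n(n-1)⋯(n-k+1) zⁿ / n! = zᵏ e^z`.
-/

open Finset

/-- The Stirling number of the second kind `S(n, k)`: the number of partitions of a set with
`n` elements into exactly `k` nonempty blocks. -/
noncomputable def stirlingSecond (n k : ℕ) : ℕ :=
  Nat.card {P : Finpartition (Finset.univ : Finset (Fin n)) // P.parts.card = k}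

/-- The `j`-th Bell polynomial `B_j(x) = Σ_{k=0}^{j} S(j,k) xᵏ`. -/
noncomputable def bellPoly (j : ℕ) (x : ℂ) : ℂ :=
  ∑ k ∈ Finset.range (j + 1), (stirlingSecond j k : ℂ) * x ^ k

open scoped Nat

theorem Finpartition.ext_part {α : Type*} [DecidableEq α] {s : Finset α} {P Q : Finpartition s}
    (h : ∀ a, P.part a = Q.part a) : P = Q := by
  have parts_subset :
      ∀ {P Q : Finpartition s}, (∀ a, P.part a = Q.part a) → P.parts ⊆ Q.parts := by
    intro P Q h t ht
    obtain ⟨a, ha, rfl⟩ := P.part_surjOn ht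
    exact h a ▸ Q.part_mem.2 ha
  exact Finpartition.ext ((parts_subset h).antisymm (parts_subset fun a => (h a).symm))

section FiberPartition

variable {α β : Type*} [Fintype α] [DecidableEq α] [DecidableEq β]

noncomputable def fiberPartition (f : α → β) : Finpartition (univ : Finset α) :=
  let _ : DecidableRel (Setoid.ker f).r := fun a b => inferInstanceAs (Decidable (f a = f b))
  Finpartition.ofSetoid (Setoid.ker f)

theorem mem_part_fiberPartition {f : α → β} {a b : α} :
    b ∈ (fiberPartition f).part a ↔ f a = f b := by
  let _ : DecidableRel (Setoid.ker f).r := fun a b => inferInstanceAs (Decidable (f a = f b))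
  exact Finpartition.mem_part_ofSetoid_iff_rel

theorem mem_part_iff_of_fiberPartition_eq {f : α → β} {P : Finpartition (univ : Finset α)}
    (hf : fiberPartition f = P) {a b : α} : b ∈ P.part a ↔ f a = f b :=
  hf ▸ mem_part_fiberPartition

noncomputable def fiberPartitionEquiv (P : Finpartition (univ : Finset α)) :
    {f : α → β // fiberPartition f = P} ≃ (P.parts ↪ β) where
  toFun f := ⟨fun t => f.1 (P.nonempty_of_mem_parts t.2).choose, by
    rintro ⟨t, ht⟩ ⟨u, hu⟩ hf
    have hmem : (P.nonempty_of_mem_parts hu).choose ∈ t := by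
      rw [← P.part_eq_of_mem ht (P.nonempty_of_mem_parts ht).choose_spec]
      exact (mem_part_iff_of_fiberPartition_eq f.2).2 hf
    exact Subtype.ext (P.eq_of_mem_parts ht hu hmem (P.nonempty_of_mem_parts hu).choose_spec)⟩
  invFun g := ⟨fun a => g ⟨P.part a, P.part_mem.2 (mem_univ a)⟩,
    Finpartition.ext_part fun a => by
      ext b
      rw [mem_part_fiberPartition, g.injective.eq_iff, Subtype.mk.injEq,
        P.mem_part_iff_part_eq_part (mem_univ b) (mem_univ a), eq_comm]⟩
  left_inv f := by
    ext a
    exact ((mem_part_iff_of_fiberPartition_eq f.2).1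
      (P.nonempty_of_mem_parts (P.part_mem.2 (mem_univ a))).choose_spec).symm
  right_inv g := by
    ext ⟨t, ht⟩
    exact congrArg (fun t => g t)
      (Subtype.ext (P.part_eq_of_mem ht (P.nonempty_of_mem_parts ht).choose_spec))

variable [Fintype β]

theorem card_fiberPartition_eq (P : Finpartition (univ : Finset α)) :
    Fintype.card {f : α → β // fiberPartition f = P} =
      (Fintype.card β).descFactorial #P.parts := by
  rw [Fintype.card_congr (fiberPartitionEquiv P), Fintype.card_embedding_eq, Fintype.card_coe]

theorem card_pow_card_eq_sum_descFactorial :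
    Fintype.card β ^ Fintype.card α =
      ∑ P : Finpartition (univ : Finset α), (Fintype.card β).descFactorial #P.parts := by
  rw [← Fintype.card_fun, ← Fintype.card_congr (Equiv.sigmaFiberEquiv (fiberPartition (β := β))),
    Fintype.card_sigma]
  simp_rw [card_fiberPartition_eq]

end FiberPartition

theorem stirlingSecond_eq_card_filter (j k : ℕ) :
    stirlingSecond j k = #{P : Finpartition (univ : Finset (Fin j)) | #P.parts = k} := by
  rw [stirlingSecond, Nat.card_eq_fintype_card, Fintype.card_subtype]

theorem pow_eq_sum_stirlingSecond_mul_descFactorial (n j : ℕ) :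
    n ^ j = ∑ k ∈ range (j + 1), stirlingSecond j k * n.descFactorial k := by
  have hcard := card_pow_card_eq_sum_descFactorial (α := Fin j) (β := Fin n)
  rw [Fintype.card_fin, Fintype.card_fin] at hcard
  rw [hcard, ← sum_fiberwise_of_maps_to (g := fun P => #P.parts) (t := range (j + 1))
    fun P _ => mem_range_succ_iff.2 (P.card_parts_le_card.trans_eq (Finset.card_fin j))]
  refine sum_congr rfl fun k _ => ?_
  rw [sum_congr rfl fun P hP => by rw [(mem_filter.1 hP).2], sum_const, smul_eq_mul,
    stirlingSecond_eq_card_filter]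

theorem hasSum_descFactorial_mul_pow_div_factorial (k : ℕ) (z : ℂ) :
    HasSum (fun n : ℕ => (n.descFactorial k : ℂ) * z ^ n / n !) (z ^ k * Complex.exp z) := by
  have shift : ∀ n : ℕ,
      ((n + k).descFactorial k : ℂ) * z ^ (n + k) / (n + k)! = z ^ k * (z ^ n / n !) := by
    intro n
    have h : (n + k)! = n ! * (n + k).descFactorial k := by
      rw [Nat.add_descFactorial_eq_ascFactorial, Nat.factorial_mul_ascFactorial]
    rw [h, Nat.cast_mul, pow_add]
    field_simp
  -- The terms with `n < k` vanish, so the series is `zᵏ Σₙ zⁿ / n!` shifted by `k`.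
  refine (add_left_injective k).hasSum_iff (fun n hn => ?_) |>.1 ?_
  · have hnk : n < k := by
      by_contra! h
      exact hn ⟨n - k, Nat.sub_add_cancel h⟩
    simp [Nat.descFactorial_eq_zero_iff_lt.2 hnk]
  · rw [Complex.exp_eq_exp_ℂ]
    exact ((NormedSpace.expSeries_div_hasSum_exp z).mul_left (z ^ k)).congr_fun shift

theorem hasSum_natCast_pow_mul_pow_div_factorial (j : ℕ) (z : ℂ) :
    HasSum (fun n : ℕ => (n : ℂ) ^ j * z ^ n / n !) (Complex.exp z * bellPoly j z) := by
  have hterm : ∀ n : ℕ, (n : ℂ) ^ j * z ^ n / n ! = ∑ k ∈ range (j + 1),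
      (stirlingSecond j k : ℂ) * ((n.descFactorial k : ℂ) * z ^ n / n !) := by
    intro n
    rw [← Nat.cast_pow, pow_eq_sum_stirlingSecond_mul_descFactorial, Nat.cast_sum, sum_mul,
      sum_div]
    exact sum_congr rfl fun k _ => by push_cast; ring
  have hbell : Complex.exp z * bellPoly j z =
      ∑ k ∈ range (j + 1), (stirlingSecond j k : ℂ) * (z ^ k * Complex.exp z) := by
    rw [bellPoly, mul_sum]
    exact sum_congr rfl fun k _ => by ring
  rw [hbell]
  exact (hasSum_sum fun k _ =>
    (hasSum_descFactorial_mul_pow_div_factorial k z).mul_left _).congr_fun hterm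

theorem NormedSpace.exp_eq_of_hasSum {𝕂 𝔸 : Type*} [Field 𝕂] [CharZero 𝕂] [Ring 𝔸]
    [Algebra 𝕂 𝔸] [TopologicalSpace 𝔸] [IsTopologicalRing 𝔸] [T2Space 𝔸] {x y : 𝔸}
    (h : HasSum (fun n => (n !⁻¹ : 𝕂) • x ^ n) y) : NormedSpace.exp x = y := by
  rw [NormedSpace.exp_eq_tsum 𝕂]
  exact h.tsum_eq

theorem exp_of_algebraic_operator_general
    {H : Type*} [NormedAddCommGroup H] [InnerProductSpace ℂ H]
    (T : H →L[ℂ] H) {s : ℕ} (lam : Fin s → ℂ) (m : Fin s → ℕ)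
    (Coef : (i : Fin s) → Fin (m i) → H →L[ℂ] H)
    (hT : ∀ n : ℕ, T ^ n = ∑ i : Fin s, ∑ j : Fin (m i),
      (((n : ℂ) ^ (j : ℕ)) * lam i ^ n) • Coef i j) :
    NormedSpace.exp T = ∑ i : Fin s, ∑ j : Fin (m i),
      (Complex.exp (lam i) * bellPoly (j : ℕ) (lam i)) • Coef i j := by
  have hterm : ∀ n : ℕ, (n !⁻¹ : ℂ) • T ^ n =
      ∑ i : Fin s, ∑ j : Fin (m i), ((n : ℂ) ^ (j : ℕ) * lam i ^ n / n !) • Coef i j := by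
    intro n
    simp only [hT n, smul_sum, smul_smul, div_eq_inv_mul]
  refine NormedSpace.exp_eq_of_hasSum (𝕂 := ℂ) (HasSum.congr_fun ?_ hterm)
  exact hasSum_sum fun i _ => hasSum_sum fun j _ =>
    (hasSum_natCast_pow_mul_pow_div_factorial j (lam i)).smul_const (Coef i j)

/-- If the powers of a bounded operator `T` admit a Binet-type expansion
`Tⁿ = Σ_i Σ_j C_{i,j} nʲ λᵢⁿ`, then the operator exponential is given by
`exp(T) = Σ_i Σ_j C_{i,j} e^{λᵢ} B_j(λᵢ)`, where `B_j` is the `j`-th Bell polynomial. -/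
theorem exp_of_algebraic_operator
    {H : Type*} [NormedAddCommGroup H] [InnerProductSpace ℂ H] [CompleteSpace H]
    (T : H →L[ℂ] H) {s : ℕ} (lam : Fin s → ℂ) (m : Fin s → ℕ) (hm : ∀ i, 0 < m i)
    (Coef : (i : Fin s) → Fin (m i) → H →L[ℂ] H)
    (hT : ∀ n : ℕ, T ^ n = ∑ i : Fin s, ∑ j : Fin (m i),
      (((n : ℂ) ^ (j : ℕ)) * lam i ^ n) • Coef i j) :
    NormedSpace.exp T = ∑ i : Fin s, ∑ j : Fin (m i),
      (Complex.exp (lam i) * bellPoly (j : ℕ) (lam i)) • Coef i j :=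
  exp_of_algebraic_operator_general T lam m Coef hT
end

section
/- (Dobinski's formula for r-Bell polynomials.) For all integers n ≥ 0 and r ≥ 0 and every real number x, the series Σ_{k=0}^{∞} (k+r)^n x^k / k! converges and equals e^x · B_{n,r}(x), where B_{n,r}(x) := Σ_{k=0}^{n} S_r(n+r, k+r) x^k and S_r(n+r, k+r) denotes the r-Stirling number of the second kind: the number of partitions of the set {1, …, n+r} into exactly k+r nonempty blocks such that the elements 1, 2, …, r lie in r distinct blocks. -/
open Finset

/-- The `r`-Stirling number of the second kind with parameters `N` and `K`: the number of
partitions of a set with `N` elements (here `{0, …, N−1}`, playing the role of `{1, …, N}`)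
into exactly `K` nonempty blocks such that the first `r` elements lie in `r` distinct blocks
(i.e., every block contains at most one of the first `r` elements). -/
noncomputable def rStirlingSecond (r N K : ℕ) : ℕ :=
  Nat.card {P : Finpartition (Finset.univ : Finset (Fin N)) //
    P.parts.card = K ∧ ∀ t ∈ P.parts, (t.filter (fun x : Fin N => (x : ℕ) < r)).card ≤ 1}

/-- The `r`-Bell polynomial `B_{n,r}(x) = Σ_{k=0}^{n} S_r(n+r, k+r) xᵏ`. -/
noncomputable def rBellPoly (n r : ℕ) (x : ℝ) : ℝ :=
  ∑ k ∈ Finset.range (n + 1), (rStirlingSecond r (n + r) (k + r) : ℝ) * x ^ k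

/-!
Removing the element `r` from a partition of `{0, …, N}` whose first `r` elements lie in distinct
blocks gives `S_r(N+1, K) = S_{r+1}(N+1, K) + r S_r(N, K)`: either the block of `r` contains
none of `0, …, r-1`, and the partition is counted by `S_{r+1}(N+1, K)`, or `r` sits in the block
of one of those `r` elements, and deleting it leaves a partition counted by `S_r(N, K)`.
Hence `B_{n+1,r}(x) = x B_{n,r+1}(x) + r B_{n,r}(x)`. The Dobinski series obey the same
recurrence, because `(k+r)^{n+1} = k (k+r)^n + r (k+r)^n` and `k xᵏ / k! = x · x^{k-1} / (k-1)!`,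
and for `n = 0` both sides are `eˣ`.
-/

namespace Finpartition

variable {α β : Type*} [Fintype α] [DecidableEq α] [Fintype β] [DecidableEq β]

theorem ext_of_mem_part {P Q : Finpartition (univ : Finset α)}
    (h : ∀ x y, x ∈ P.part y ↔ x ∈ Q.part y) : P = Q := by
  have hpart : ∀ y, P.part y = Q.part y := fun y => Finset.ext fun x => h x y
  ext t
  constructor
  · intro ht
    obtain ⟨y, hy⟩ := P.nonempty_of_mem_parts ht
    rw [← P.part_eq_of_mem ht hy, hpart]
    exact Q.part_mem.2 (mem_univ y)
  · intro ht
    obtain ⟨y, hy⟩ := Q.nonempty_of_mem_parts ht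
    rw [← Q.part_eq_of_mem ht hy, ← hpart]
    exact P.part_mem.2 (mem_univ y)

def comap (P : Finpartition (univ : Finset α)) (g : β → α) : Finpartition (univ : Finset β) :=
  ofExistsUnique ((P.parts.image fun t => univ.filter (g · ∈ t)).erase ∅)
    (fun _ _ => subset_univ _)
    (fun y _ => by
      obtain ⟨t, ⟨ht, hyt⟩, hunique⟩ := P.existsUnique_mem (mem_univ (g y))
      refine ⟨univ.filter (g · ∈ t),
        ⟨mem_erase.2 ⟨?_, mem_image_of_mem _ ht⟩, by simpa using hyt⟩, ?_⟩
      · exact ne_empty_of_mem (a := y) (by simpa using hyt)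
      · rintro _ ⟨hu, hyu⟩
        obtain ⟨t', ht', rfl⟩ := mem_image.1 (mem_of_mem_erase hu)
        rw [hunique t' ⟨ht', by simpa using hyu⟩])
    (notMem_erase _ _)

def Separates (S : α → Prop) (P : Finpartition (univ : Finset α)) : Prop :=
  ∀ ⦃x y⦄, S x → S y → x ∈ P.part y → x = y

variable (P : Finpartition (univ : Finset α)) (g : β → α)

theorem mem_part_comap (x y : β) : x ∈ (P.comap g).part y ↔ g x ∈ P.part (g y) := by
  have hmem : univ.filter (g · ∈ P.part (g y)) ∈ (P.comap g).parts := by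
    refine mem_erase.2 ⟨ne_empty_of_mem (a := y) ?_, mem_image_of_mem _ ?_⟩
    · simp
    · exact P.part_mem.2 (mem_univ _)
  rw [(P.comap g).part_eq_of_mem hmem (by simp)]
  simp

theorem card_parts_comap (hg : ∀ t ∈ P.parts, ∃ y, g y ∈ t) :
    #(P.comap g).parts = #P.parts := by
  have hne : ∅ ∉ P.parts.image fun t => univ.filter (g · ∈ t) := by
    rintro h
    obtain ⟨t, ht, hte⟩ := mem_image.1 h
    obtain ⟨y, hy⟩ := hg t ht
    have : y ∈ univ.filter (g · ∈ t) := by simpa using hy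
    simp [hte] at this
  rw [comap, ofExistsUnique_parts, erase_eq_of_notMem hne]
  refine card_image_of_injOn ?_
  intro t ht t' ht' htt'
  obtain ⟨y, hy⟩ := hg t ht
  have : y ∈ univ.filter (g · ∈ t) := by simpa using hy
  rw [show univ.filter (g · ∈ t) = univ.filter (g · ∈ t') from htt', mem_filter] at this
  exact P.eq_of_mem_parts ht ht' hy this.2

theorem card_parts_comap_of_surjective (hg : Function.Surjective g) :
    #(P.comap g).parts = #P.parts :=
  P.card_parts_comap g fun t ht => by
    obtain ⟨x, hx⟩ := P.nonempty_of_mem_parts ht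
    obtain ⟨y, rfl⟩ := hg x
    exact ⟨y, hx⟩

theorem comap_comap_eq_self (f : α → β) (hgf : ∀ x, P.part (g (f x)) = P.part x) :
    (P.comap g).comap f = P := by
  refine ext_of_mem_part fun x y => ?_
  simp only [mem_part_comap, P.mem_part_iff_part_eq_part (mem_univ _) (mem_univ _), hgf]

theorem separates_iff_card_filter_le_one (S : α → Prop) [DecidablePred S] :
    P.Separates S ↔ ∀ t ∈ P.parts, #(t.filter S) ≤ 1 := by
  constructor
  · intro hP t ht
    refine card_le_one.2 fun x hx y hy => ?_
    rw [mem_filter] at hx hy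
    exact hP hx.2 hy.2 (P.part_eq_of_mem ht hy.1 ▸ hx.1)
  · intro hP x y hx hy hxy
    exact card_le_one.1 (hP _ (P.part_mem.2 (mem_univ y))) x (mem_filter.2 ⟨hxy, hx⟩) y
      (mem_filter.2 ⟨P.mem_part_self.2 (mem_univ y), hy⟩)

variable {P}

theorem Separates.comap {S : β → Prop} {S' : α → Prop} (hP : P.Separates S')
    (hS : ∀ y, S y → S' (g y)) (hg : Set.InjOn g {y | S y}) : (P.comap g).Separates S :=
  fun x y hx hy hxy => hg hx hy (hP (hS x hx) (hS y hy) ((P.mem_part_comap g x y).1 hxy))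

theorem Separates.card_filter_le_card_parts {S : α → Prop} [DecidablePred S]
    (hP : P.Separates S) : #(univ.filter S) ≤ #P.parts := by
  refine card_le_card_of_injOn P.part (fun x _ => P.part_mem.2 (mem_univ x)) ?_
  intro x hx y hy hxy
  rw [coe_filter] at hx hy
  exact hP hx.2 hy.2 (hxy ▸ P.mem_part_self.2 (mem_univ x))

theorem Separates.eq_bot {S : α → Prop} (hP : P.Separates S) (hS : ∀ x, S x) : P = ⊥ := by
  refine le_antisymm (fun t ht => ?_) bot_le
  obtain ⟨a, ha⟩ := P.nonempty_of_mem_parts ht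
  refine ⟨{a}, mem_bot_iff.2 ⟨a, mem_univ a, rfl⟩, fun x hx => mem_singleton.2 ?_⟩
  exact hP (hS x) (hS a) (P.part_eq_of_mem ht ha ▸ hx)

theorem separates_or_eq_iff {S : α → Prop} {a : α} (ha : ¬S a) :
    P.Separates (fun x => S x ∨ x = a) ↔ P.Separates S ∧ ∀ x ∈ P.part a, ¬S x := by
  have hsymm : ∀ x y, x ∈ P.part y ↔ y ∈ P.part x := fun x y => by
    rw [P.mem_part_iff_part_eq_part (mem_univ _) (mem_univ _),
      P.mem_part_iff_part_eq_part (mem_univ _) (mem_univ _), eq_comm]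
  constructor
  · intro hP
    refine ⟨fun x y hx hy hxy => hP (Or.inl hx) (Or.inl hy) hxy, fun x hx hSx => ?_⟩
    exact ha (hP (Or.inl hSx) (Or.inr rfl) hx ▸ hSx)
  · rintro ⟨hP, hpart⟩ x y (hx | rfl) (hy | rfl) hxy
    · exact hP hx hy hxy
    · exact absurd hx (hpart x hxy)
    · exact absurd hy (hpart y ((hsymm _ _).1 hxy))
    · rfl

theorem separates_bot (S : α → Prop) : (⊥ : Finpartition (univ : Finset α)).Separates S := by
  classical
  refine ((⊥ : Finpartition (univ : Finset α)).separates_iff_card_filter_le_one S).2 ?_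
  intro t ht
  obtain ⟨a, -, rfl⟩ := mem_bot_iff.1 ht
  exact (card_filter_le _ _).trans (card_singleton a).le

variable {N : ℕ} (p : Fin (N + 1))

theorem card_parts_comap_succAbove (P : Finpartition (univ : Finset (Fin (N + 1))))
    (hp : ∃ x ∈ P.part p, x ≠ p) : #(P.comap p.succAbove).parts = #P.parts := by
  refine P.card_parts_comap _ fun t ht => ?_
  obtain ⟨x, hxt, hxp⟩ : ∃ x ∈ t, x ≠ p := by
    by_cases hpt : p ∈ t
    · exact P.part_eq_of_mem ht hpt ▸ hp
    · obtain ⟨x, hx⟩ := P.nonempty_of_mem_parts ht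
      exact ⟨x, hx, fun h => hpt (h ▸ hx)⟩
  obtain ⟨j, rfl⟩ := Fin.exists_succAbove_eq hxp
  exact ⟨j, hxt⟩

theorem card_parts_comap_insertNth (P : Finpartition (univ : Finset (Fin N))) (a : Fin N) :
    #(P.comap (p.insertNth a id)).parts = #P.parts :=
  P.card_parts_comap_of_surjective _ fun j =>
    ⟨p.succAbove j, by rw [Fin.insertNth_apply_succAbove, id]⟩

theorem comap_insertNth_comap_succAbove (P : Finpartition (univ : Finset (Fin N))) (a : Fin N) :
    (P.comap (p.insertNth a id)).comap p.succAbove = P :=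
  P.comap_comap_eq_self _ _ fun x => by rw [Fin.insertNth_apply_succAbove, id]

theorem comap_succAbove_comap_insertNth (P : Finpartition (univ : Finset (Fin (N + 1))))
    {a : Fin N} (ha : p.succAbove a ∈ P.part p) :
    (P.comap p.succAbove).comap (p.insertNth a id) = P := by
  refine P.comap_comap_eq_self _ _ fun x => ?_
  rcases p.eq_self_or_eq_succAbove x with rfl | ⟨j, rfl⟩
  · rw [Fin.insertNth_apply_same]
    exact (P.mem_part_iff_part_eq_part (mem_univ _) (mem_univ _)).1 ha
  · rw [Fin.insertNth_apply_succAbove, id]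

theorem succAbove_mem_part_comap_insertNth (P : Finpartition (univ : Finset (Fin N)))
    (a : Fin N) : p.succAbove a ∈ (P.comap (p.insertNth a id)).part p := by
  rw [mem_part_comap, Fin.insertNth_apply_same, Fin.insertNth_apply_succAbove, id]
  exact P.mem_part_self.2 (mem_univ a)

end Finpartition

open Finpartition

theorem Nat.card_subtype_eq_card_and_add_card_and_not {α : Type*} [Finite α] (p q : α → Prop) :
    Nat.card {x // p x} = Nat.card {x // p x ∧ q x} + Nat.card {x // p x ∧ ¬q x} := by
  classical
  rw [← Nat.card_sum]
  exact Nat.card_congr ((Equiv.sumCompl fun x : {x // p x} => q x).symm.trans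
    ((Equiv.subtypeSubtypeEquivSubtypeInter p q).sumCongr
      (Equiv.subtypeSubtypeEquivSubtypeInter p (¬q ·))))

def IsRPartition (r K : ℕ) {N : ℕ} (P : Finpartition (univ : Finset (Fin N))) : Prop :=
  #P.parts = K ∧ P.Separates fun x : Fin N => (x : ℕ) < r

section RStirling

variable {r N K : ℕ}

theorem rStirlingSecond_eq_card (r N K : ℕ) :
    rStirlingSecond r N K =
      Nat.card {P : Finpartition (univ : Finset (Fin N)) // IsRPartition r K P} := by
  simp_rw [rStirlingSecond, IsRPartition, separates_iff_card_filter_le_one]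

theorem rStirlingSecond_eq_zero_of_lt (hrN : r ≤ N) (hK : K < r) : rStirlingSecond r N K = 0 := by
  rw [rStirlingSecond_eq_card, Nat.card_eq_zero]
  refine Or.inl ⟨fun ⟨P, hPK, hP⟩ => ?_⟩
  have := hP.card_filter_le_card_parts
  rw [Fin.card_filter_val_lt, hPK] at this
  omega

theorem rStirlingSecond_eq_zero_of_gt (hK : N < K) : rStirlingSecond r N K = 0 := by
  rw [rStirlingSecond_eq_card, Nat.card_eq_zero]
  refine Or.inl ⟨fun ⟨P, hPK, _⟩ => ?_⟩
  have := P.card_parts_le_card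
  rw [card_univ, Fintype.card_fin, hPK] at this
  omega

theorem rStirlingSecond_self (r : ℕ) : rStirlingSecond r r r = 1 := by
  rw [rStirlingSecond_eq_card, Nat.card_eq_one_iff_unique]
  refine ⟨⟨fun P Q => Subtype.ext ?_⟩,
    ⟨⟨⊥, by rw [card_bot, card_univ, Fintype.card_fin], separates_bot _⟩⟩⟩
  exact (P.2.2.eq_bot fun x => x.2).trans (Q.2.2.eq_bot fun x => x.2).symm

end RStirling

section RStirlingRecurrence

variable {r N K : ℕ} (hrN : r ≤ N)

def rPivot : Fin (N + 1) := ⟨r, Nat.lt_succ_of_le hrN⟩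

theorem val_succAbove_rPivot_lt_iff (j : Fin N) :
    ((rPivot hrN).succAbove j : ℕ) < r ↔ (j : ℕ) < r := by
  rcases lt_or_ge (j : ℕ) r with h | h
  · rw [Fin.succAbove_of_castSucc_lt _ _ h]
    simp
  · rw [Fin.succAbove_of_le_castSucc _ _ h]
    simp only [Fin.val_succ]
    omega

theorem exists_succAbove_rPivot_eq_of_lt {y : Fin (N + 1)} (hy : (y : ℕ) < r) :
    ∃ j : Fin N, (j : ℕ) < r ∧ (rPivot hrN).succAbove j = y := by
  rcases (rPivot hrN).eq_self_or_eq_succAbove y with rfl | ⟨j, rfl⟩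
  · exact absurd hy (lt_irrefl r)
  · exact ⟨j, (val_succAbove_rPivot_lt_iff hrN j).1 hy, rfl⟩

theorem Finpartition.Separates.comap_insertNth_rPivot {P : Finpartition (univ : Finset (Fin N))}
    (hP : P.Separates fun x : Fin N => (x : ℕ) < r) (a : Fin N) :
    (P.comap ((rPivot hrN).insertNth a id)).Separates fun x : Fin (N + 1) => (x : ℕ) < r := by
  refine hP.comap _ (fun y hy => ?_) (fun y hy z hz hyz => ?_)
  · obtain ⟨j, hj, rfl⟩ := exists_succAbove_rPivot_eq_of_lt hrN hy
    rwa [Fin.insertNth_apply_succAbove]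
  · obtain ⟨j, -, rfl⟩ := exists_succAbove_rPivot_eq_of_lt hrN hy
    obtain ⟨k, -, rfl⟩ := exists_succAbove_rPivot_eq_of_lt hrN hz
    rw [Fin.insertNth_apply_succAbove, Fin.insertNth_apply_succAbove] at hyz
    exact congrArg _ hyz

theorem Finpartition.Separates.comap_succAbove_rPivot
    {P : Finpartition (univ : Finset (Fin (N + 1)))}
    (hP : P.Separates fun x : Fin (N + 1) => (x : ℕ) < r) :
    (P.comap (rPivot hrN).succAbove).Separates fun x : Fin N => (x : ℕ) < r :=
  hP.comap _ (fun j hj => (val_succAbove_rPivot_lt_iff hrN j).2 hj)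
    Fin.succAbove_right_injective.injOn

theorem separates_lt_succ_iff (P : Finpartition (univ : Finset (Fin (N + 1)))) :
    (P.Separates fun x : Fin (N + 1) => (x : ℕ) < r + 1) ↔
      (P.Separates fun x : Fin (N + 1) => (x : ℕ) < r) ∧
        ¬∃ x ∈ P.part (rPivot hrN), (x : ℕ) < r := by
  have hlt : (fun x : Fin (N + 1) => (x : ℕ) < r + 1) =
      fun x : Fin (N + 1) => (x : ℕ) < r ∨ x = rPivot hrN :=
    funext fun x => by rw [Nat.lt_succ_iff_lt_or_eq, Fin.ext_iff]; rfl
  rw [hlt, separates_or_eq_iff (S := fun x : Fin (N + 1) => (x : ℕ) < r) (lt_irrefl r)]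
  simp only [not_exists, not_and]

/-- The pivot `r` joins the block of the special element `a`. -/
def insertRPivot (a : Fin r)
    (P : {P : Finpartition (univ : Finset (Fin N)) // IsRPartition r K P}) :
    {P : Finpartition (univ : Finset (Fin (N + 1))) //
      IsRPartition r K P ∧ ∃ x ∈ P.part (rPivot hrN), (x : ℕ) < r} :=
  ⟨P.1.comap ((rPivot hrN).insertNth (Fin.castLE hrN a) id),
    ⟨(card_parts_comap_insertNth _ _ _).trans P.2.1, P.2.2.comap_insertNth_rPivot hrN _⟩,
    _, succAbove_mem_part_comap_insertNth _ _ _, (val_succAbove_rPivot_lt_iff hrN _).2 a.2⟩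

theorem insertRPivot_bijective :
    Function.Bijective (Function.uncurry (insertRPivot (K := K) hrN)) := by
  set p := rPivot hrN
  constructor
  · rintro ⟨a, P, hPK, hP⟩ ⟨b, Q, hQK, hQ⟩ h
    have hcomap : P.comap (p.insertNth (Fin.castLE hrN a) id) =
        Q.comap (p.insertNth (Fin.castLE hrN b) id) :=
      congrArg Subtype.val h
    obtain rfl : P = Q := by
      rw [← comap_insertNth_comap_succAbove p P (Fin.castLE hrN a), hcomap,
        comap_insertNth_comap_succAbove]
    have hab := succAbove_mem_part_comap_insertNth p P (Fin.castLE hrN b)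
    rw [← hcomap, mem_part_comap, Fin.insertNth_apply_same, Fin.insertNth_apply_succAbove,
      id] at hab
    obtain rfl := Fin.castLE_injective hrN (hP b.2 a.2 hab)
    rfl
  · rintro ⟨P, ⟨hPK, hP⟩, x, hxp, hxr⟩
    obtain ⟨j, hjr, rfl⟩ := exists_succAbove_rPivot_eq_of_lt hrN hxr
    refine ⟨(⟨j, hjr⟩, ⟨P.comap p.succAbove,
      (card_parts_comap_succAbove p P ⟨_, hxp, Fin.succAbove_ne _ _⟩).trans hPK,
      hP.comap_succAbove_rPivot hrN⟩), Subtype.ext ?_⟩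
    exact comap_succAbove_comap_insertNth p P hxp

end RStirlingRecurrence

theorem rStirlingSecond_succ {r N : ℕ} (hrN : r ≤ N) (K : ℕ) :
    rStirlingSecond r (N + 1) K =
      rStirlingSecond (r + 1) (N + 1) K + r * rStirlingSecond r N K := by
  simp only [rStirlingSecond_eq_card]
  set Q := fun P : Finpartition (univ : Finset (Fin (N + 1))) =>
    ∃ x ∈ P.part (rPivot hrN), (x : ℕ) < r
  rw [Nat.card_subtype_eq_card_and_add_card_and_not _ Q,
    ← Nat.card_eq_of_bijective _ (insertRPivot_bijective hrN), Nat.card_prod, Nat.card_fin,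
    add_comm]
  congr 1
  exact Nat.card_congr <| Equiv.subtypeEquivRight fun P => by
    rw [IsRPartition, IsRPartition, separates_lt_succ_iff hrN, and_assoc]

theorem rBellPoly_zero (r : ℕ) (x : ℝ) : rBellPoly 0 r x = 1 := by
  simp [rBellPoly, rStirlingSecond_self]

theorem rBellPoly_succ (n r : ℕ) (x : ℝ) :
    rBellPoly (n + 1) r x = x * rBellPoly n (r + 1) x + r * rBellPoly n r x := by
  have hcoeff : ∀ k, (rStirlingSecond r (n + 1 + r) (k + r) : ℝ) =
      rStirlingSecond (r + 1) (n + (r + 1)) (k + r) + r * rStirlingSecond r (n + r) (k + r) := by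
    intro k
    rw [show n + 1 + r = n + r + 1 by omega, rStirlingSecond_succ (by omega),
      show n + r + 1 = n + (r + 1) by omega]
    push_cast
    ring
  simp only [rBellPoly, hcoeff, add_mul, sum_add_distrib, mul_sum]
  congr 1
  · rw [sum_range_succ', rStirlingSecond_eq_zero_of_lt (by omega) (by omega)]
    simp only [Nat.cast_zero, zero_mul, add_zero, pow_succ]
    refine sum_congr rfl fun k _ => ?_
    rw [show k + 1 + r = k + (r + 1) by omega]
    ring
  · rw [sum_range_succ, rStirlingSecond_eq_zero_of_gt (by omega)]
    simp only [Nat.cast_zero, zero_mul, mul_zero, add_zero]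
    exact sum_congr rfl fun k _ => by ring

theorem HasSum.natCast_mul_pow_div_factorial {c : ℕ → ℝ} {x s : ℝ}
    (h : HasSum (fun k => c (k + 1) * x ^ k / k.factorial) s) :
    HasSum (fun k => k * c k * x ^ k / k.factorial) (x * s) := by
  have hterm : ∀ k : ℕ, ((k + 1 : ℕ) : ℝ) * c (k + 1) * x ^ (k + 1) / (k + 1).factorial =
      x * (c (k + 1) * x ^ k / k.factorial) := fun k => by
    rw [Nat.factorial_succ, pow_succ]
    push_cast
    field_simp
  rw [← hasSum_nat_add_iff' 1]
  simpa only [hterm, sum_range_one, Nat.cast_zero, zero_mul, zero_div, sub_zero] using h.mul_left x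

/-- Dobinski's formula for `r`-Bell polynomials: for all `n, r ≥ 0` and every real `x`, the
series `Σ_{k≥0} (k+r)ⁿ xᵏ / k!` converges to `eˣ · B_{n,r}(x)`. -/
theorem dobinski_r_bell_polynomial (n r : ℕ) (x : ℝ) :
    HasSum (fun k : ℕ => ((k + r : ℕ) : ℝ) ^ n * x ^ k / (k.factorial : ℝ))
      (Real.exp x * rBellPoly n r x) := by
  induction n generalizing r with
  | zero =>
    simpa [rBellPoly_zero, Real.exp_eq_exp_ℝ] using NormedSpace.expSeries_div_hasSum_exp x
  | succ n ih =>
    have hshift := HasSum.natCast_mul_pow_div_factorial (c := fun k => ((k + r : ℕ) : ℝ) ^ n)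
      (by simpa only [Nat.add_right_comm _ 1 r, Nat.add_assoc] using ih (r + 1))
    convert hshift.add ((ih r).mul_left (r : ℝ)) using 1
    · ext k
      push_cast
      ring
    · rw [rBellPoly_succ]
      ring
end
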